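/- arXiv:2401.12397 — 2 statements merged into one kernel-verified Lean document; each statement's English description precedes it below -/
import Mathlib

section
/- Assume that for every finite graph G, every set of vertices A, every vertex 0 and every monotone cluster property f one has E(f(0)·1{0↔A}) ≥ min_{a∈A} E(f(a)·1{0↔A}), in the particular case f(g,ω) = |C_ω(g)| (cluster size). Then for every finite graph G, A ⊆ G, and vertices 0, b: P(0↔b) ≥ min_{a∈A} P(0↔A, a↔b). -/
open scoped BigOperators

structure PercGraph (V E : Type) where
  ends : E → V × V
  p : E → ℝ

namespace PercGraph

variable {V E : Type} [DecidableEq V] [Fintype E] [DecidableEq E]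

/-- Weight of a configuration: each edge `e` is open (`ω e = true`) with probability `p e`. -/
def weight (G : PercGraph V E) (ω : E → Bool) : ℝ :=
  ∏ e, if ω e then G.p e else 1 - G.p e

/-- Probability of an event under the percolation measure. -/
noncomputable def prob (G : PercGraph V E) (S : Set (E → Bool)) : ℝ :=
  ∑ ω : E → Bool, Set.indicator S G.weight ω

/-- Expectation of a function under the percolation measure. -/
noncomputable def expec (G : PercGraph V E) (f : (E → Bool) → ℝ) : ℝ :=
  ∑ ω : E → Bool, f ω * G.weight ω

/-- Two vertices are adjacent via an open edge in configuration `ω`. -/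
def adj (G : PercGraph V E) (ω : E → Bool) (x y : V) : Prop :=
  ∃ e, ω e = true ∧ (G.ends e = (x, y) ∨ G.ends e = (y, x))

/-- `x` and `y` are connected by a path of open edges. -/
def Conn (G : PercGraph V E) (ω : E → Bool) (x y : V) : Prop :=
  Relation.ReflTransGen (G.adj ω) x y

/-- The union of the open clusters of the vertices of `A`. -/
def cluster (G : PercGraph V E) (ω : E → Bool) (A : Set V) : Set V :=
  {y | ∃ a ∈ A, G.Conn ω a y}

/-- The event `x ↔ y`. -/
def connEvent (G : PercGraph V E) (x y : V) : Set (E → Bool) :=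
  {ω | G.Conn ω x y}

/-- The event `x ↔ A`. -/
def connTo (G : PercGraph V E) (x : V) (A : Set V) : Set (E → Bool) :=
  {ω | ∃ a ∈ A, G.Conn ω x a}

/-- The event `A ↮ B`. -/
def disconn (G : PercGraph V E) (A B : Set V) : Set (E → Bool) :=
  {ω | ∀ a ∈ A, ∀ b ∈ B, ¬ G.Conn ω a b}

def IncreasingEvent (S : Set (E → Bool)) : Prop :=
  ∀ ⦃ω ω' : E → Bool⦄, (∀ e, ω e = true → ω' e = true) → ω ∈ S → ω' ∈ S

def DecreasingEvent (S : Set (E → Bool)) : Prop :=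
  ∀ ⦃ω ω' : E → Bool⦄, (∀ e, ω e = true → ω' e = true) → ω' ∈ S → ω ∈ S

def IncreasingFun (f : (E → Bool) → ℝ) : Prop :=
  ∀ ⦃ω ω' : E → Bool⦄, (∀ e, ω e = true → ω' e = true) → f ω ≤ f ω'

/-- `f` is determined by the cluster of `A`. -/
def ClusterDetermined (G : PercGraph V E) (A : Set V) (f : (E → Bool) → ℝ) : Prop :=
  ∀ ω ω', G.cluster ω A = G.cluster ω' A → f ω = f ω'

/-- The event `S` is determined by the cluster of `A`. -/
def ClusterDeterminedEvent (G : PercGraph V E) (A : Set V) (S : Set (E → Bool)) : Prop :=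
  ∀ ω ω', G.cluster ω A = G.cluster ω' A → (ω ∈ S ↔ ω' ∈ S)

noncomputable def condProb (G : PercGraph V E) (S T : Set (E → Bool)) : ℝ :=
  G.prob (S ∩ T) / G.prob T

noncomputable def condExpec (G : PercGraph V E) (f : (E → Bool) → ℝ) (T : Set (E → Bool)) : ℝ :=
  G.expec (T.indicator f) / G.prob T

/-- The edge `e` is incident to the vertex `x`. -/
def incident (G : PercGraph V E) (x : V) (e : E) : Prop :=
  (G.ends e).1 = x ∨ (G.ends e).2 = x

/-- The other endpoint of an edge incident to `x`. -/
def otherEnd (G : PercGraph V E) (x : V) (e : E) : V :=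
  if (G.ends e).1 = x then (G.ends e).2 else (G.ends e).1

/-- The graph `G ∖ W`: delete the vertices of `W` and all incident edges. -/
def delete (G : PercGraph V E) (W : Finset V) :
    PercGraph V {e : E // (G.ends e).1 ∉ W ∧ (G.ends e).2 ∉ W} :=
  ⟨fun e => G.ends e.1, fun e => G.p e.1⟩

/-- The graph `G` with the probability of edge `e` replaced by `q`. -/
def withEdgeProb (G : PercGraph V E) (e : E) (q : ℝ) : PercGraph V E :=
  ⟨G.ends, Function.update G.p e q⟩

/-- Contraction of the edge `e`: set its probability to 1. -/
def contract (G : PercGraph V E) (e : E) : PercGraph V E :=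
  G.withEdgeProb e 1

/-- The event that `e` is pivotal for `U`. -/
def pivotal (e : E) (U : Set (E → Bool)) : Set (E → Bool) :=
  {ω | ¬ ((Function.update ω e true ∈ U) ↔ (Function.update ω e false ∈ U))}

/-- All edge probabilities lie in `[0,1]`. -/
def ProbValid (G : PercGraph V E) : Prop := ∀ e, 0 ≤ G.p e ∧ G.p e ≤ 1

end PercGraph

/-! Attach `k` pendant vertices to `b` by edges that are always open. In the enlarged graph the
cluster of `a` has at least `k` vertices on `{a ↔ b}`, while the cluster of `x₀` has at most
`|V| + k · 1{x₀ ↔ b}`. The hypothesis applied to the enlarged graph therefore gives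
`k · min_a P(x₀ ↔ A, a ↔ b) ≤ |V| + k · P(x₀ ↔ b)` for every `k`; let `k → ∞`. -/

lemma le_of_forall_natCast_mul_le_add {α : Type*} [Field α] [LinearOrder α]
    [IsStrictOrderedRing α] [Archimedean α] {a b C : α}
    (h : ∀ k : ℕ, k * a ≤ C + k * b) : a ≤ b := by
  by_contra! hba
  obtain ⟨k, hk⟩ := exists_nat_gt (C / (a - b))
  have := (div_lt_iff₀ (sub_pos.2 hba)).1 hk
  linarith [h k]

namespace PercGraph

variable {V E : Type}

section Expectation

variable [Fintype E] {G : PercGraph V E}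

lemma weight_nonneg (hG : G.ProbValid) (ω : E → Bool) : 0 ≤ G.weight ω :=
  Finset.prod_nonneg fun e _ => by
    obtain ⟨h0, h1⟩ := hG e
    split <;> linarith

variable [DecidableEq E]

lemma expec_mono (hG : G.ProbValid) {f g : (E → Bool) → ℝ} (hfg : ∀ ω, f ω ≤ g ω) :
    G.expec f ≤ G.expec g :=
  Finset.sum_le_sum fun ω _ => mul_le_mul_of_nonneg_right (hfg ω) (weight_nonneg hG ω)

lemma expec_add (f g : (E → Bool) → ℝ) : G.expec (f + g) = G.expec f + G.expec g := by
  simp only [expec, Pi.add_apply, add_mul, Finset.sum_add_distrib]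

lemma expec_const_mul (c : ℝ) (f : (E → Bool) → ℝ) :
    G.expec (fun ω => c * f ω) = c * G.expec f := by
  simp only [expec, mul_assoc, Finset.mul_sum]

lemma prob_eq_expec_indicator (S : Set (E → Bool)) : G.prob S = G.expec (S.indicator 1) := by
  refine Finset.sum_congr rfl fun ω _ => ?_
  by_cases hω : ω ∈ S <;> simp [hω]

end Expectation

def attachPendants (G : PercGraph V E) (b : V) (k : ℕ) : PercGraph (V ⊕ Fin k) (E ⊕ Fin k) where
  ends := Sum.elim (fun e => (Sum.inl (G.ends e).1, Sum.inl (G.ends e).2))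
    (fun i => (Sum.inl b, Sum.inr i))
  p := Sum.elim G.p (fun _ => 1)

def openPendants (k : ℕ) (ω : E → Bool) : E ⊕ Fin k → Bool := Sum.elim ω (fun _ => true)

def collapse (b : V) {k : ℕ} : V ⊕ Fin k → V := Sum.elim id (fun _ => b)

@[simp] lemma collapse_inl (b v : V) {k : ℕ} : collapse (k := k) b (.inl v) = v := rfl

@[simp] lemma collapse_inr (b : V) {k : ℕ} (i : Fin k) : collapse b (.inr i) = b := rfl

variable {G : PercGraph V E} {b : V} {k : ℕ}

lemma ProbValid.attachPendants (hG : G.ProbValid) (b : V) (k : ℕ) :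
    (G.attachPendants b k).ProbValid := by
  rintro (e | i)
  · exact hG e
  · exact ⟨zero_le_one, le_rfl⟩

lemma Conn.collapse {ω : E ⊕ Fin k → Bool} {u v : V ⊕ Fin k}
    (h : (G.attachPendants b k).Conn ω u v) :
    G.Conn (ω ∘ Sum.inl) (collapse b u) (collapse b v) := by
  induction h with
  | refl => exact .refl
  | tail _ hadj ih =>
    obtain ⟨e | i, he, hends⟩ := hadj
    · refine ih.tail ⟨e, he, ?_⟩
      rcases hends with h | h <;> simp only [PercGraph.attachPendants, Sum.elim_inl,
        Prod.mk.injEq] at h <;> obtain ⟨rfl, rfl⟩ := h <;> simp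
    · rcases hends with h | h <;> simp only [PercGraph.attachPendants, Sum.elim_inr,
        Prod.mk.injEq] at h <;> obtain ⟨rfl, rfl⟩ := h <;> simpa using ih

lemma Conn.attachPendants {ω : E → Bool} {x y : V} (h : G.Conn ω x y) :
    (G.attachPendants b k).Conn (openPendants k ω) (.inl x) (.inl y) := by
  induction h with
  | refl => exact .refl
  | tail _ hadj ih =>
    obtain ⟨e, he, hends⟩ := hadj
    refine ih.tail ⟨.inl e, he, ?_⟩
    rcases hends with h | h <;> simp [PercGraph.attachPendants, h]

lemma conn_attachPendants_inl_iff {ω : E → Bool} {x y : V} :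
    (G.attachPendants b k).Conn (openPendants k ω) (.inl x) (.inl y) ↔ G.Conn ω x y :=
  ⟨fun h => by simpa [openPendants] using h.collapse, Conn.attachPendants⟩

lemma openPendants_mem_connTo_iff [DecidableEq V] {ω : E → Bool} {x : V} {A : Finset V} :
    openPendants k ω ∈
        (G.attachPendants b k).connTo (.inl x) ↑(A.image Sum.inl : Finset (V ⊕ Fin k)) ↔
      ω ∈ G.connTo x ↑A := by
  simp [connTo, conn_attachPendants_inl_iff]

section ClusterSize

variable [Fintype V]

lemma le_ncard_cluster_attachPendants {ω : E → Bool} {a : V} (h : G.Conn ω a b) :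
    k ≤ ((G.attachPendants b k).cluster (openPendants k ω) {.inl a}).ncard := by
  have hsub : Set.range (Sum.inr : Fin k → V ⊕ Fin k) ⊆
      (G.attachPendants b k).cluster (openPendants k ω) {.inl a} := by
    rintro _ ⟨i, rfl⟩
    exact ⟨.inl a, rfl, h.attachPendants.tail ⟨.inr i, rfl, .inl rfl⟩⟩
  calc k = (Set.range (Sum.inr : Fin k → V ⊕ Fin k)).ncard := by
        rw [Set.ncard_range_of_injective Sum.inr_injective, Nat.card_eq_fintype_card,
          Fintype.card_fin]
    _ ≤ _ := Set.ncard_le_ncard hsub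

/-- The pendant vertices lie in the cluster of `x` only if `x ↔ b`. -/
lemma ncard_cluster_attachPendants_le (ω : E → Bool) (x : V) :
    (((G.attachPendants b k).cluster (openPendants k ω) {.inl x}).ncard : ℝ) ≤
      Fintype.card V + k * (G.connEvent x b).indicator 1 ω := by
  by_cases hxb : G.Conn ω x b
  · have : ((G.attachPendants b k).cluster (openPendants k ω) {.inl x}).ncard ≤
        Fintype.card V + k := by
      simpa using Set.ncard_le_ncard (Set.subset_univ _) (Set.finite_univ (α := V ⊕ Fin k))
    simpa [connEvent, hxb] using (Nat.cast_le (α := ℝ)).2 this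
  · have hsub : (G.attachPendants b k).cluster (openPendants k ω) {.inl x} ⊆
        Set.range Sum.inl := by
      rintro (v | i) ⟨_, rfl, hconn⟩
      · exact ⟨v, rfl⟩
      · exact absurd (by simpa [openPendants] using hconn.collapse) hxb
    have := Set.ncard_le_ncard hsub
    simp_all [connEvent, Set.ncard_range_of_injective Sum.inl_injective]

end ClusterSize

variable [Fintype E]

lemma weight_attachPendants_openPendants (ω : E → Bool) :
    (G.attachPendants b k).weight (openPendants k ω) = G.weight ω := by
  simp only [weight, openPendants, PercGraph.attachPendants, Fintype.prod_sum_type, Sum.elim_inl,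
    Sum.elim_inr, ↓reduceIte, Finset.prod_const_one, mul_one]
  rfl

lemma weight_attachPendants_eq_zero {ω : E → Bool} {τ : Fin k → Bool} {i : Fin k}
    (hi : τ i = false) : (G.attachPendants b k).weight (Sum.elim ω τ) = 0 :=
  Finset.prod_eq_zero (Finset.mem_univ (Sum.inr i)) (by simp [hi, PercGraph.attachPendants])

variable [DecidableEq E]

/-- Almost surely every pendant edge is open, so the pendant coordinates integrate out. -/
lemma expec_attachPendants (F : (E ⊕ Fin k → Bool) → ℝ) :
    (G.attachPendants b k).expec F = G.expec (fun ω => F (openPendants k ω)) := by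
  rw [expec, ← (Equiv.sumArrowEquivProdArrow E (Fin k) Bool).symm.sum_comp,
    Fintype.sum_prod_type]
  refine Finset.sum_congr rfl fun ω _ => ?_
  rw [Finset.sum_eq_single (fun _ => true)]
  · exact congrArg (F (openPendants k ω) * ·) (weight_attachPendants_openPendants ω)
  · intro τ _ hτ
    obtain ⟨i, hi⟩ : ∃ i, τ i = false := by
      by_contra! h
      exact hτ (funext fun i => by simpa using h i)
    exact mul_eq_zero_of_right _ (weight_attachPendants_eq_zero hi)
  · exact fun h => absurd (Finset.mem_univ _) h

variable [Fintype V]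

lemma natCast_mul_prob_le_expec_cluster_attachPendants [DecidableEq V] (hG : G.ProbValid)
    {A : Finset V} {x a : V} :
    k * G.prob (G.connTo x ↑A ∩ G.connEvent a b) ≤
      (G.attachPendants b k).expec (((G.attachPendants b k).connTo (.inl x)
        ↑(A.image Sum.inl : Finset (V ⊕ Fin k))).indicator
          fun ω => (((G.attachPendants b k).cluster ω {.inl a}).ncard : ℝ)) := by
  rw [prob_eq_expec_indicator, ← expec_const_mul, expec_attachPendants]
  refine expec_mono hG fun ω => ?_
  by_cases hω : ω ∈ G.connTo x ↑A ∩ G.connEvent a b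
  · rw [Set.indicator_of_mem hω, Set.indicator_of_mem (openPendants_mem_connTo_iff.2 hω.1)]
    simpa using le_ncard_cluster_attachPendants hω.2
  · rw [Set.indicator_of_notMem hω, mul_zero]
    exact Set.indicator_nonneg (fun _ _ => Nat.cast_nonneg _) _

lemma expec_cluster_attachPendants_le (hG : G.ProbValid) (S : Set (E ⊕ Fin k → Bool)) (x : V) :
    (G.attachPendants b k).expec
        (S.indicator fun ω => (((G.attachPendants b k).cluster ω {.inl x}).ncard : ℝ)) ≤
      G.expec (fun _ => Fintype.card V) + k * G.prob (G.connEvent x b) := by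
  rw [expec_attachPendants, prob_eq_expec_indicator, ← expec_const_mul, ← expec_add]
  refine expec_mono hG fun ω => ?_
  exact (Set.indicator_le_self' (fun _ _ => Nat.cast_nonneg _) _).trans
    (ncard_cluster_attachPendants_le ω x)

end PercGraph

/-- if the monotone-cluster-property conjecture holds for cluster
size on every finite graph, then the pre-FKG conjecture holds on every finite graph. -/
theorem preFKG_of_clusterSize
    (H : ∀ (V E : Type) [Fintype V] [DecidableEq V] [Fintype E] [DecidableEq E]
        (G : PercGraph V E), G.ProbValid →
        ∀ (A : Finset V) (hA : A.Nonempty) (x₀ : V),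
        A.inf' hA (fun a => G.expec (Set.indicator (G.connTo x₀ ↑A)
            (fun ω => ((G.cluster ω {a}).ncard : ℝ))))
          ≤ G.expec (Set.indicator (G.connTo x₀ ↑A)
            (fun ω => ((G.cluster ω {x₀}).ncard : ℝ)))) :
    ∀ (V E : Type) [Fintype V] [DecidableEq V] [Fintype E] [DecidableEq E]
      (G : PercGraph V E), G.ProbValid →
      ∀ (A : Finset V) (hA : A.Nonempty) (x₀ b : V),
      A.inf' hA (fun a => G.prob (G.connTo x₀ ↑A ∩ G.connEvent a b))
        ≤ G.prob (G.connEvent x₀ b) := by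
  intro V E _ _ _ _ G hG A hA x₀ b
  refine le_of_forall_natCast_mul_le_add (C := G.expec fun _ => Fintype.card V) fun k => ?_
  have hH := H _ _ (G.attachPendants b k) (hG.attachPendants b k) (A.image Sum.inl)
    (hA.image _) (.inl x₀)
  rw [Finset.inf'_image] at hH
  calc (k : ℝ) * A.inf' hA (fun a => G.prob (G.connTo x₀ ↑A ∩ G.connEvent a b))
      ≤ _ := Finset.le_inf' _ _ fun a ha =>
        (mul_le_mul_of_nonneg_left (Finset.inf'_le _ ha) k.cast_nonneg).trans
          (PercGraph.natCast_mul_prob_le_expec_cluster_attachPendants hG)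
    _ ≤ _ := hH
    _ ≤ _ := PercGraph.expec_cluster_attachPendants_le hG _ x₀
end

section
/- There is a directed graph counterexample to conjecture inequality for directed percolation: consider the directed graph on vertices {0, a₁, a₂, b} with directed edges 0→a₁, 0→a₂, a₁→b, a₂→b each open independently with probability 1/2, and directed edges a₁→0, a₂→0 open with probability 1. Then P(0→b) = 7/16, while P(0→{a₁,a₂})·P(a₁→b) = (3/4)·(5/8) = 15/32 > 7/16, where v→w denotes the existence of a directed open path from v to w. (By symmetry P(a₁→b) = P(a₂→b) = 5/8.) -/
open scoped BigOperators

/-- Endpoints of the six directed edges of the counterexample graph on the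
vertices `0, a₁ = 1, a₂ = 2, b = 3`. -/
def dirEnds : Fin 6 → Fin 4 × Fin 4 :=
  ![(0, 1), (0, 2), (1, 3), (2, 3), (1, 0), (2, 0)]

/-- Edge probabilities: the four edges `0→a₁, 0→a₂, a₁→b, a₂→b` have probability
`1/2`; the return edges `a₁→0, a₂→0` have probability `1`. -/
noncomputable def dirP : Fin 6 → ℝ := ![1/2, 1/2, 1/2, 1/2, 1, 1]

/-- One open directed step. -/
def dirStep (ω : Fin 6 → Bool) (x y : Fin 4) : Prop :=
  ∃ e, ω e = true ∧ dirEnds e = (x, y)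

/-- Directed open connectivity `x → y`. -/
def dirConn (ω : Fin 6 → Bool) (x y : Fin 4) : Prop :=
  Relation.ReflTransGen (dirStep ω) x y

/-- Probability of an event under the directed percolation measure. -/
noncomputable def dirProb (S : Set (Fin 6 → Bool)) : ℝ :=
  ∑ ω : Fin 6 → Bool,
    Set.indicator S (fun ω => ∏ e, if ω e then dirP e else 1 - dirP e) ω

/-- Explicit boolean reachability table for the counterexample graph. -/
def connB (ω : Fin 6 → Bool) (x y : Fin 4) : Bool :=
  match x, y with
  | 0,0 => true | 0,1 => ω 0 | 0,2 => ω 1 | 0,3 => (ω 0 && ω 2) || (ω 1 && ω 3)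
  | 1,0 => ω 4 | 1,1 => true | 1,2 => ω 4 && ω 1
  | 1,3 => ω 2 || (ω 4 && ((ω 0 && ω 2) || (ω 1 && ω 3)))
  | 2,0 => ω 5 | 2,1 => ω 5 && ω 0 | 2,2 => true
  | 2,3 => ω 3 || (ω 5 && ((ω 0 && ω 2) || (ω 1 && ω 3)))
  | 3,0 => false | 3,1 => false | 3,2 => false | 3,3 => true

lemma connB_refl : ∀ (ω : Fin 6 → Bool) (x : Fin 4), connB ω x x = true := by decide

lemma connB_closure : ∀ (ω : Fin 6 → Bool) (x y z : Fin 4) (e : Fin 6),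
    connB ω x y = true → ω e = true → dirEnds e = (y, z) → connB ω x z = true := by decide

lemma connB_of_dirConn {ω : Fin 6 → Bool} {x y : Fin 4} (h : dirConn ω x y) :
    connB ω x y = true := by
  induction h with
  | refl => exact connB_refl ω x
  | tail _ hstep ih =>
    obtain ⟨e, he, hends⟩ := hstep
    exact connB_closure ω x _ _ e ih he hends

lemma dirConn_step {ω : Fin 6 → Bool} (e : Fin 6) (he : ω e = true)
    {x y : Fin 4} (h : dirEnds e = (x, y)) : dirConn ω x y :=
  Relation.ReflTransGen.single ⟨e, he, h⟩

lemma dirConn_of_connB {ω : Fin 6 → Bool} {x y : Fin 4} (h : connB ω x y = true) :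
    dirConn ω x y := by
  have h03 : (ω 0 = true ∧ ω 2 = true) ∨ (ω 1 = true ∧ ω 3 = true) → dirConn ω 0 3 := by
    rintro (⟨ha, hb⟩ | ⟨ha, hb⟩)
    · exact (dirConn_step 0 ha rfl).trans (dirConn_step 2 hb rfl)
    · exact (dirConn_step 1 ha rfl).trans (dirConn_step 3 hb rfl)
  fin_cases x <;> fin_cases y <;>
    simp only [connB, Bool.or_eq_true, Bool.and_eq_true] at h ⊢
  · exact Relation.ReflTransGen.refl
  · exact dirConn_step 0 h rfl
  · exact dirConn_step 1 h rfl
  · exact h03 h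
  · exact dirConn_step 4 h rfl
  · exact Relation.ReflTransGen.refl
  · exact (dirConn_step 4 h.1 rfl).trans (dirConn_step 1 h.2 rfl)
  · rcases h with h | ⟨ha, hb⟩
    · exact dirConn_step 2 h rfl
    · exact (dirConn_step 4 ha rfl).trans (h03 hb)
  · exact dirConn_step 5 h rfl
  · exact (dirConn_step 5 h.1 rfl).trans (dirConn_step 0 h.2 rfl)
  · exact Relation.ReflTransGen.refl
  · rcases h with h | ⟨ha, hb⟩
    · exact dirConn_step 3 h rfl
    · exact (dirConn_step 5 ha rfl).trans (h03 hb)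
  · exact absurd h (by simp)
  · exact absurd h (by simp)
  · exact absurd h (by simp)
  · exact Relation.ReflTransGen.refl

lemma dirConn_iff (ω : Fin 6 → Bool) (x y : Fin 4) :
    dirConn ω x y ↔ connB ω x y = true :=
  ⟨connB_of_dirConn, dirConn_of_connB⟩

lemma weight_eq (ω : Fin 6 → Bool) :
    (∏ e, if ω e then dirP e else 1 - dirP e) =
      if ω 4 && ω 5 then (1/16 : ℝ) else 0 := by
  rw [Fin.prod_univ_six]
  have f0 : (if ω 0 then dirP 0 else 1 - dirP 0) = 1/2 := by
    cases ω 0 <;> simp [dirP] <;> norm_num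
  have f1 : (if ω 1 then dirP 1 else 1 - dirP 1) = 1/2 := by
    cases ω 1 <;> simp [dirP] <;> norm_num
  have f2 : (if ω 2 then dirP 2 else 1 - dirP 2) = 1/2 := by
    cases ω 2 <;> simp [dirP] <;> norm_num
  have f3 : (if ω 3 then dirP 3 else 1 - dirP 3) = 1/2 := by
    cases ω 3 <;> simp [dirP] <;> norm_num
  have f4 : (if ω 4 then dirP 4 else 1 - dirP 4) = if ω 4 then 1 else 0 := by
    cases ω 4 <;> simp [show dirP 4 = 1 from rfl]
  have f5 : (if ω 5 then dirP 5 else 1 - dirP 5) = if ω 5 then 1 else 0 := by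
    cases ω 5 <;> simp [show dirP 5 = 1 from rfl]
  rw [f0, f1, f2, f3, f4, f5]
  cases h4 : ω 4 <;> cases h5 : ω 5 <;> simp [h4, h5] <;> norm_num

lemma dirProb_count (c : (Fin 6 → Bool) → Bool) :
    dirProb {ω | c ω = true} =
      ((Finset.univ.filter fun ω : Fin 6 → Bool => c ω && ω 4 && ω 5).card : ℝ) / 16 := by
  unfold dirProb
  rw [Finset.card_filter]
  push_cast
  rw [Finset.sum_div]
  refine Finset.sum_congr rfl fun ω _ => ?_
  rw [Set.indicator_apply, weight_eq]
  by_cases hc : c ω = true <;> cases h4 : ω 4 <;> cases h5 : ω 5 <;>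
    simp [hc, h4, h5, Set.mem_setOf_eq] <;> norm_num

/-- directed percolation counterexample:
`P(0→b) = 7/16` while `P(0→{a₁,a₂}) = 3/4`, `P(a₁→b) = P(a₂→b) = 5/8`, and
`7/16 < (3/4)·(5/8)`, so `P(0→b) < P(0→A)·min_a P(a→b)`. -/
theorem directed_counterexample :
    dirProb {ω | dirConn ω 0 3} = 7 / 16 ∧
    dirProb {ω | dirConn ω 0 1 ∨ dirConn ω 0 2} = 3 / 4 ∧
    dirProb {ω | dirConn ω 1 3} = 5 / 8 ∧
    dirProb {ω | dirConn ω 2 3} = 5 / 8 ∧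
    dirProb {ω | dirConn ω 0 3} <
      dirProb {ω | dirConn ω 0 1 ∨ dirConn ω 0 2} *
        min (dirProb {ω | dirConn ω 1 3}) (dirProb {ω | dirConn ω 2 3}) := by
  have e1 : {ω : Fin 6 → Bool | dirConn ω 0 3} = {ω | connB ω 0 3 = true} := by
    ext ω; exact dirConn_iff ω 0 3
  have e2 : {ω : Fin 6 → Bool | dirConn ω 0 1 ∨ dirConn ω 0 2} =
      {ω | (connB ω 0 1 || connB ω 0 2) = true} := by
    ext ω
    simp only [Set.mem_setOf_eq, dirConn_iff, Bool.or_eq_true_iff]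
  have e3 : {ω : Fin 6 → Bool | dirConn ω 1 3} = {ω | connB ω 1 3 = true} := by
    ext ω; exact dirConn_iff ω 1 3
  have e4 : {ω : Fin 6 → Bool | dirConn ω 2 3} = {ω | connB ω 2 3 = true} := by
    ext ω; exact dirConn_iff ω 2 3
  have c1 : (Finset.univ.filter fun ω : Fin 6 → Bool =>
      connB ω 0 3 && ω 4 && ω 5).card = 7 := by decide
  have c2 : (Finset.univ.filter fun ω : Fin 6 → Bool =>
      (connB ω 0 1 || connB ω 0 2) && ω 4 && ω 5).card = 12 := by decide
  have c3 : (Finset.univ.filter fun ω : Fin 6 → Bool =>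
      connB ω 1 3 && ω 4 && ω 5).card = 10 := by decide
  have c4 : (Finset.univ.filter fun ω : Fin 6 → Bool =>
      connB ω 2 3 && ω 4 && ω 5).card = 10 := by decide
  have p1 := dirProb_count fun ω => connB ω 0 3
  have p2 := dirProb_count fun ω => connB ω 0 1 || connB ω 0 2
  have p3 := dirProb_count fun ω => connB ω 1 3
  have p4 := dirProb_count fun ω => connB ω 2 3
  rw [c1] at p1; rw [c2] at p2; rw [c3] at p3; rw [c4] at p4
  rw [e1, e2, e3, e4, p1, p2, p3, p4]
  norm_num
end
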